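/- arXiv:2411.13193 — 2 statements merged into one kernel-verified Lean document; each statement's English description precedes it below -/
import Mathlib

section
/- The interval poset of a permutation π of [n] is a tree (its Hasse diagram is a tree) if and only if π has no two intervals I, J with I ⊄ J, J ⊄ I, and I ∩ J ≠ ∅. -/
/-- A set of values in `Fin n` is consecutive if it is closed under betweenness. -/
def Consec {n : ℕ} (S : Finset (Fin n)) : Prop :=
  ∀ ⦃x y z : Fin n⦄, x ∈ S → z ∈ S → x ≤ y → y ≤ z → y ∈ S

/-- `I` is an interval of the permutation `π` if both `I` and its preimage under `π`
are sets of consecutive integers. -/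
def IsInterval {n : ℕ} (π : Equiv.Perm (Fin n)) (I : Finset (Fin n)) : Prop :=
  Consec I ∧ Consec (I.image π.symm)

/-- The 1-based integer interval `[a,b]` viewed inside `Fin n`
(the element `x : Fin n` represents the value `x.val + 1`). -/
def ivl (n a b : ℕ) : Finset (Fin n) :=
  Finset.univ.filter (fun x => a ≤ x.val + 1 ∧ x.val + 1 ≤ b)

/-- J is covered by I in the interval poset of π. -/
def IntervalCover {n : ℕ} (π : Equiv.Perm (Fin n)) (I J : Finset (Fin n)) : Prop :=
  J ⊂ I ∧ ¬ ∃ K : Finset (Fin n), IsInterval π K ∧ K.Nonempty ∧ J ⊂ K ∧ K ⊂ I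

/-- The Hasse diagram of the interval poset of π, as an undirected simple graph on the
nonempty intervals of π, with an edge for each covering relation. -/
def HasseGraph (n : ℕ) (π : Equiv.Perm (Fin n)) :
    SimpleGraph {I : Finset (Fin n) // IsInterval π I ∧ I.Nonempty} where
  Adj x y := IntervalCover π x.1 y.1 ∨ IntervalCover π y.1 x.1
  symm := ⟨fun _ _ h => h.symm⟩
  loopless := ⟨fun x h => by
    rcases h with h | h <;> exact absurd h.1 (ssubset_irrefl _)⟩


/-!
Both directions are statements about the Hasse diagram of a finite poset, here the nonempty
intervals of `π` ordered by inclusion, in which two meeting intervals have their intersection as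
a common lower bound and their union as a common upper bound.

If `c ≤ a ≤ d` and `c ≤ b ≤ d`, saturated chains through `a` and through `b` are two paths from
`c` to `d`; in an acyclic graph they coincide, so `a` and `b` lie on one chain and are
comparable. Conversely, if any two elements with a common lower bound are comparable, a minimal
vertex of a cycle is covered by both of its neighbours on the cycle, which are then comparable
and hence equal. Connectivity comes from chains up to the top interval `univ`.
-/

namespace SimpleGraph

variable {α : Type*} [PartialOrder α]

theorem exists_hasse_walk_of_le [LocallyFiniteOrder α] {a b : α} (hab : a ≤ b) :
    ∃ p : (hasse α).Walk a b, p.support.Pairwise (· < ·) ∧ ∀ x ∈ p.support, a ≤ x ∧ x ≤ b := by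
  induction le_iff_reflTransGen_covBy.1 hab using Relation.ReflTransGen.head_induction_on with
  | refl => exact ⟨.nil, by simp, by simp⟩
  | @head a c hac hcb ih =>
    have hcb := le_iff_reflTransGen_covBy.2 hcb
    obtain ⟨p, hp, hpb⟩ := ih hcb
    refine ⟨.cons (hasse_adj.2 (Or.inl hac)) p, ?_, ?_⟩
    · simp only [Walk.support_cons, List.pairwise_cons]
      exact ⟨fun x hx => hac.lt.trans_le (hpb x hx).1, hp⟩
    · simp only [Walk.support_cons, List.mem_cons, forall_eq_or_imp]
      exact ⟨⟨le_rfl, hac.le.trans hcb⟩, fun x hx => ⟨hac.le.trans (hpb x hx).1, (hpb x hx).2⟩⟩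

theorem exists_hasse_walk_of_le_of_le [LocallyFiniteOrder α] {a b c : α} (hab : a ≤ b)
    (hbc : b ≤ c) :
    ∃ p : (hasse α).Walk a c, p.support.Pairwise (· < ·) ∧ b ∈ p.support := by
  obtain ⟨p, hp, hpb⟩ := exists_hasse_walk_of_le hab
  obtain ⟨q, hq, -⟩ := exists_hasse_walk_of_le hbc
  have hq' := q.cons_tail_support.symm ▸ hq
  refine ⟨p.append q, ?_, Walk.support_subset_support_append_left p q p.end_mem_support⟩
  rw [Walk.support_append, List.pairwise_append]
  exact ⟨hp, (List.pairwise_cons.1 hq').2,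
    fun x hx y hy => ((hpb x hx).2).trans_lt ((List.pairwise_cons.1 hq').1 y hy)⟩

theorem le_total_of_hasse_isAcyclic [LocallyFiniteOrder α] (hG : (hasse α).IsAcyclic)
    {a b c d : α} (hca : c ≤ a) (had : a ≤ d) (hcb : c ≤ b) (hbd : b ≤ d) : a ≤ b ∨ b ≤ a := by
  obtain ⟨p, hp, ha⟩ := exists_hasse_walk_of_le_of_le hca had
  obtain ⟨q, hq, hb⟩ := exists_hasse_walk_of_le_of_le hcb hbd
  have hpq : p = q := congrArg Subtype.val <|
    (hG.subsingleton_path c d).elim ⟨p, .mk' (hp.imp ne_of_lt)⟩ ⟨q, .mk' (hq.imp ne_of_lt)⟩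
  subst hpq
  obtain rfl | hab := eq_or_ne a b
  · exact .inl le_rfl
  · let Comparable : α → α → Prop := fun x y => x ≤ y ∨ y ≤ x
    have : Std.Symm Comparable := ⟨fun _ _ => Or.symm⟩
    exact (hp.imp (S := Comparable) fun h => .inl h.le).forall ha hb hab

theorem hasse_preconnected_of_isDirected [LocallyFiniteOrder α] [IsDirected α (· ≤ ·)] :
    (hasse α).Preconnected := by
  have reachable_of_le {a b : α} (hab : a ≤ b) : (hasse α).Reachable a b :=
    (exists_hasse_walk_of_le hab).elim fun p _ => p.reachable
  intro a b
  obtain ⟨c, hac, hbc⟩ := directed_of (· ≤ ·) a b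
  exact (reachable_of_le hac).trans (reachable_of_le hbc).symm

theorem hasse_isAcyclic_of_le_total_of_le
    (h : ∀ a b c : α, c ≤ a → c ≤ b → a ≤ b ∨ b ≤ a) : (hasse α).IsAcyclic := by
  classical
  intro v c hc
  obtain ⟨u, hu, humin⟩ := c.support.toFinset.exists_minimal ⟨v, by simp⟩
  rw [List.mem_toFinset] at hu
  set c' := c.rotate u hu
  have hc' : c'.IsCycle := hc.rotate hu
  have covBy_of_adj {w : α} (hw : w ∈ c'.support) (huw : (hasse α).Adj u w) : u ⋖ w := by
    refine (hasse_adj.1 huw).resolve_right fun hwu => hwu.lt.not_ge (humin ?_ hwu.le)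
    simpa using (c.mem_support_rotate_iff u hu).1 hw
  have hx := covBy_of_adj (c'.getVert_mem_support 1) (c'.adj_snd hc'.not_nil)
  have hy := covBy_of_adj (c'.getVert_mem_support _) (c'.adj_penultimate hc'.not_nil).symm
  refine hc'.snd_ne_penultimate ?_
  rcases h _ _ u hx.le hy.le with hxy | hyx
  · exact hxy.eq_of_not_lt fun hlt => hy.2 hx.lt hlt
  · exact (hyx.eq_of_not_lt fun hlt => hx.2 hy.lt hlt).symm

end SimpleGraph

theorem Consec.inter {n : ℕ} {S T : Finset (Fin n)} (hS : Consec S) (hT : Consec T) :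
    Consec (S ∩ T) := by
  intro x y z hx hz hxy hyz
  rw [Finset.mem_inter] at *
  exact ⟨hS hx.1 hz.1 hxy hyz, hT hx.2 hz.2 hxy hyz⟩

theorem Consec.union {n : ℕ} {S T : Finset (Fin n)} (hS : Consec S) (hT : Consec T)
    (hST : (S ∩ T).Nonempty) : Consec (S ∪ T) := by
  obtain ⟨w, hw⟩ := hST
  obtain ⟨hwS, hwT⟩ := Finset.mem_inter.1 hw
  intro x y z hx hz hxy hyz
  rw [Finset.mem_union] at *
  rcases hx with hx | hx <;> rcases hz with hz | hz
  · exact .inl (hS hx hz hxy hyz)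
  · exact (le_total y w).elim (fun h => .inl (hS hx hwS hxy h)) (fun h => .inr (hT hwT hz h hyz))
  · exact (le_total y w).elim (fun h => .inr (hT hx hwT hxy h)) (fun h => .inl (hS hwS hz h hyz))
  · exact .inr (hT hx hz hxy hyz)

namespace IsInterval

variable {n : ℕ} {π : Equiv.Perm (Fin n)} {I J : Finset (Fin n)}

theorem inter (hI : IsInterval π I) (hJ : IsInterval π J) : IsInterval π (I ∩ J) :=
  ⟨hI.1.inter hJ.1, Finset.image_inter _ _ π.symm.injective ▸ hI.2.inter hJ.2⟩

theorem union (hI : IsInterval π I) (hJ : IsInterval π J) (hIJ : (I ∩ J).Nonempty) :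
    IsInterval π (I ∪ J) := by
  refine ⟨hI.1.union hJ.1 hIJ, ?_⟩
  rw [Finset.image_union]
  refine hI.2.union hJ.2 ?_
  rw [← Finset.image_inter _ _ π.symm.injective]
  exact hIJ.image _

theorem univ (π : Equiv.Perm (Fin n)) : IsInterval π Finset.univ :=
  ⟨fun _ y _ _ _ _ _ => Finset.mem_univ y, fun _ y _ _ _ _ _ => by simp⟩

end IsInterval

abbrev IntervalPoset {n : ℕ} (π : Equiv.Perm (Fin n)) : Type :=
  {I : Finset (Fin n) // IsInterval π I ∧ I.Nonempty}

theorem intervalCover_iff_covBy {n : ℕ} {π : Equiv.Perm (Fin n)}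
    {I J : IntervalPoset π} :
    IntervalCover π I J ↔ J ⋖ I := by
  simp [IntervalCover, CovBy, ← Subtype.coe_lt_coe]

theorem hasseGraph_eq_hasse (n : ℕ) (π : Equiv.Perm (Fin n)) :
    HasseGraph n π = SimpleGraph.hasse (IntervalPoset π) := by
  ext I J
  simp only [HasseGraph, SimpleGraph.hasse_adj, intervalCover_iff_covBy, or_comm]

/-- the interval poset of a permutation π of [n] is a tree (its Hasse
diagram is a tree) if and only if π has no two non-nested intersecting intervals. -/
theorem tree_iff_no_intersecting (n : ℕ) (hn : 1 ≤ n) (π : Equiv.Perm (Fin n)) :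
    (HasseGraph n π).IsTree ↔
      ¬ ∃ I J : Finset (Fin n), IsInterval π I ∧ I.Nonempty ∧ IsInterval π J ∧
        J.Nonempty ∧ ¬ I ⊆ J ∧ ¬ J ⊆ I ∧ (I ∩ J).Nonempty := by
  classical
  rw [hasseGraph_eq_hasse]
  constructor
  · rintro hG ⟨I, J, hI, hIne, hJ, hJne, hIJ, hJI, hIJne⟩
    have hcomp := SimpleGraph.le_total_of_hasse_isAcyclic hG.isAcyclic
      (a := ⟨I, hI, hIne⟩) (b := ⟨J, hJ, hJne⟩) (c := ⟨I ∩ J, hI.inter hJ, hIJne⟩)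
      (d := ⟨I ∪ J, hI.union hJ hIJne, hIne.mono Finset.subset_union_left⟩)
      Finset.inter_subset_left Finset.subset_union_left
      Finset.inter_subset_right Finset.subset_union_right
    exact hcomp.elim hIJ hJI
  · let top : IntervalPoset π :=
      ⟨.univ, .univ π, Finset.univ_nonempty_iff.2 ⟨⟨0, hn⟩⟩⟩
    have : IsDirected (IntervalPoset π) (· ≤ ·) :=
      ⟨fun I J => ⟨top, Finset.subset_univ I.1, Finset.subset_univ J.1⟩⟩
    have : Nonempty (IntervalPoset π) := ⟨top⟩
    refine fun hcross => ⟨⟨SimpleGraph.hasse_preconnected_of_isDirected⟩,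
      SimpleGraph.hasse_isAcyclic_of_le_total_of_le fun I J K hKI hKJ => ?_⟩
    by_contra! h
    obtain ⟨k, hk⟩ := K.2.2
    exact hcross ⟨I, J, I.2.1, I.2.2, J.2.1, J.2.2, h.1, h.2, k, Finset.mem_inter.2 ⟨hKI hk, hKJ hk⟩⟩
end

section
/- An interval poset of a block-wise simple permutation is a tree. That is, if π is block-wise simple, then the Hasse diagram of its interval poset P(π) is a tree. -/
/-- π is block-wise simple: no interval of π is the disjoint union of two nonempty
intervals of π. -/
def BlockwiseSimple {n : ℕ} (π : Equiv.Perm (Fin n)) : Prop :=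
  ¬ ∃ I K : Finset (Fin n), IsInterval π I ∧ IsInterval π K ∧ IsInterval π (K \ I) ∧
    I.Nonempty ∧ (K \ I).Nonempty ∧ I ⊂ K

/-!
Block-wise simplicity makes the intervals of `π` laminar: if two intervals `A`, `B` meet without
being nested, then `A ∪ B` is the disjoint union of the intervals `A` and `B \ A`. Hence every
nonempty interval other than `[n]` has exactly one cover, and every edge of the Hasse diagram joins
an interval to that cover. Measuring depth by the size of the complement, every vertex except the
root `[n]` has exactly one neighbour of smaller depth and no edge joins vertices of equal depth.
Such a graph is a tree: descending in depth reaches the root, and the deepest vertex of a cycle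
would have two distinct shallower neighbours on it.
-/

namespace SimpleGraph

variable {V α : Type*} {G : SimpleGraph V}

theorem connected_of_exists_adj_lt [LT α] [WellFoundedLT α] (r : V) (f : V → α)
    (hex : ∀ v, v ≠ r → ∃ w, G.Adj v w ∧ f w < f v) : G.Connected := by
  have reach : ∀ v, G.Reachable v r := fun v => by
    induction v using (InvImage.wf f wellFounded_lt).induction with
    | _ v ih =>
      by_cases hv : v = r
      · exact hv ▸ Reachable.refl v
      · obtain ⟨w, hvw, hlt⟩ := hex v hv
        exact hvw.reachable.trans (ih w hlt)
  have : Nonempty V := ⟨r⟩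
  exact ⟨fun u v => (reach u).trans (reach v).symm⟩

theorem isAcyclic_of_unique_adj_lt [LinearOrder α] (f : V → α) (hne : ∀ ⦃u v⦄, G.Adj u v → f u ≠ f v)
    (huniq : ∀ ⦃v w w'⦄, G.Adj v w → G.Adj v w' → f w < f v → f w' < f v → w = w') :
    G.IsAcyclic := by
  classical
  intro v c hc
  obtain ⟨u, hu, hmax⟩ := c.support.toFinset.exists_max_image f ⟨v, by simp⟩
  rw [List.mem_toFinset] at hu
  set c' := c.rotate u hu
  have hc' : c'.IsCycle := hc.rotate hu
  have below : ∀ w ∈ c'.support, G.Adj u w → f w < f u := fun w hw huw =>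
    (hmax w (by simpa [c'] using hw)).lt_of_ne (hne huw).symm
  have h_snd : G.Adj u c'.snd := c'.adj_snd hc'.not_nil
  have h_pen : G.Adj u c'.penultimate := (c'.adj_penultimate hc'.not_nil).symm
  exact hc'.snd_ne_penultimate <| huniq h_snd h_pen
    (below _ (c'.getVert_mem_support _) h_snd) (below _ (c'.getVert_mem_support _) h_pen)

end SimpleGraph

section Intervals

variable {n : ℕ} {π : Equiv.Perm (Fin n)} {A B : Finset (Fin n)}

theorem Consec.union_s17 (hA : Consec A) (hB : Consec B) {w : Fin n} (hwA : w ∈ A) (hwB : w ∈ B) :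
    Consec (A ∪ B) := by
  intro x y z hx hz hxy hyz
  rw [Finset.mem_union] at hx hz ⊢
  rcases hx with hx | hx <;> rcases hz with hz | hz
  · exact Or.inl (hA hx hz hxy hyz)
  · rcases le_total y w with hyw | hwy
    exacts [Or.inl (hA hx hwA hxy hyw), Or.inr (hB hwB hz hwy hyz)]
  · rcases le_total y w with hyw | hwy
    exacts [Or.inr (hB hx hwB hxy hyw), Or.inl (hA hwA hz hwy hyz)]
  · exact Or.inr (hB hx hz hxy hyz)

theorem Consec.sdiff (hA : Consec A) (hB : Consec B) {b : Fin n} (hbB : b ∈ B) (hbA : b ∉ A) :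
    Consec (A \ B) := by
  intro x y z hx hz hxy hyz
  rw [Finset.mem_sdiff] at hx hz ⊢
  refine ⟨hA hx.1 hz.1 hxy hyz, fun hyB => ?_⟩
  rcases le_total b x with hbx | hxb
  · exact hx.2 (hB hbB hyB hbx hxy)
  rcases le_total z b with hzb | hbz
  · exact hz.2 (hB hyB hbB hyz hzb)
  exact hbA (hA hx.1 hz.1 hxb hbz)

theorem isInterval_univ : IsInterval π Finset.univ :=
  ⟨fun _ y _ _ _ _ _ => Finset.mem_univ y,
    fun _ y _ _ _ _ _ => Finset.mem_image.2 ⟨π y, Finset.mem_univ _, π.symm_apply_apply y⟩⟩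

theorem IsInterval.union_s17 (hA : IsInterval π A) (hB : IsInterval π B) {w : Fin n} (hwA : w ∈ A)
    (hwB : w ∈ B) : IsInterval π (A ∪ B) := by
  refine ⟨hA.1.union_s17 hB.1 hwA hwB, ?_⟩
  rw [Finset.image_union]
  exact hA.2.union_s17 hB.2 (Finset.mem_image_of_mem _ hwA) (Finset.mem_image_of_mem _ hwB)

theorem IsInterval.sdiff (hA : IsInterval π A) (hB : IsInterval π B) {b : Fin n} (hbB : b ∈ B)
    (hbA : b ∉ A) : IsInterval π (A \ B) := by
  refine ⟨hA.1.sdiff hB.1 hbB hbA, ?_⟩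
  rw [Finset.image_sdiff _ _ π.symm.injective]
  exact hA.2.sdiff hB.2 (Finset.mem_image_of_mem _ hbB)
    (by rwa [π.symm.injective.mem_finset_image])

theorem BlockwiseSimple.subset_or_subset (h : BlockwiseSimple π) (hA : IsInterval π A)
    (hB : IsInterval π B) (hAB : (A ∩ B).Nonempty) : A ⊆ B ∨ B ⊆ A := by
  by_contra! hc
  obtain ⟨a, haA, haB⟩ := Finset.not_subset.1 hc.1
  obtain ⟨b, hbB, hbA⟩ := Finset.not_subset.1 hc.2
  obtain ⟨w, hw⟩ := hAB
  rw [Finset.mem_inter] at hw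
  refine h ⟨A, A ∪ B, hA, hA.union_s17 hB hw.1 hw.2, ?_, ⟨a, haA⟩, ?_, ?_⟩
  · rw [Finset.union_sdiff_left]
    exact hB.sdiff hA haA haB
  · exact ⟨b, by simp [hbB, hbA]⟩
  · exact Finset.ssubset_iff_of_subset Finset.subset_union_left |>.2
      ⟨b, Finset.mem_union_right _ hbB, hbA⟩

theorem exists_intervalCover_of_ne_univ (hA : A ≠ Finset.univ) :
    ∃ I, IsInterval π I ∧ IntervalCover π I A := by
  classical
  obtain ⟨I, ⟨hI, hAI⟩, hmin⟩ := Set.exists_min_image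
    {K : Finset (Fin n) | IsInterval π K ∧ A ⊂ K} Finset.card (Set.toFinite _)
    ⟨Finset.univ, isInterval_univ, (Finset.subset_univ A).ssubset_of_ne hA⟩
  exact ⟨I, hI, hAI, fun ⟨K, hK, _, hAK, hKI⟩ =>
    (Finset.card_lt_card hKI).not_ge (hmin K ⟨hK, hAK⟩)⟩

theorem BlockwiseSimple.eq_of_intervalCover (h : BlockwiseSimple π) {J : Finset (Fin n)}
    (hJ : J.Nonempty) (hA : IsInterval π A) (hB : IsInterval π B) (hA₀ : A.Nonempty)
    (hB₀ : B.Nonempty) (hAJ : IntervalCover π A J) (hBJ : IntervalCover π B J) : A = B := by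
  obtain ⟨j, hj⟩ := hJ
  rcases h.subset_or_subset hA hB ⟨j, Finset.mem_inter.2 ⟨hAJ.1.1 hj, hBJ.1.1 hj⟩⟩
    with hAB | hBA
  · by_contra hne
    exact hBJ.2 ⟨A, hA, hA₀, hAJ.1, hAB.ssubset_of_ne hne⟩
  · by_contra hne
    exact hAJ.2 ⟨B, hB, hB₀, hBJ.1, hBA.ssubset_of_ne (Ne.symm hne)⟩

end Intervals

/-- the interval poset of a block-wise simple permutation is a tree. -/
theorem blockwise_simple_tree (n : ℕ) (hn : 1 ≤ n) (π : Equiv.Perm (Fin n))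
    (h : BlockwiseSimple π) : (HasseGraph n π).IsTree := by
  let top : {I : Finset (Fin n) // IsInterval π I ∧ I.Nonempty} :=
    ⟨Finset.univ, isInterval_univ, Finset.univ_nonempty_iff.2 ⟨⟨0, hn⟩⟩⟩
  let depth : {I : Finset (Fin n) // IsInterval π I ∧ I.Nonempty} → ℕ := fun I => I.1ᶜ.card
  have depth_lt {I J} (hIJ : I.1 ⊂ J.1) : depth J < depth I :=
    Finset.card_lt_card (Finset.compl_ssubset_compl.2 hIJ)
  refine ⟨SimpleGraph.connected_of_exists_adj_lt top depth fun I hI => ?_,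
    SimpleGraph.isAcyclic_of_unique_adj_lt depth ?_ fun I J J' hJ hJ' hlt hlt' => ?_⟩
  · obtain ⟨J, hJ, hIJ⟩ := exists_intervalCover_of_ne_univ (π := π) fun hU => hI (Subtype.ext hU)
    exact ⟨⟨J, hJ, I.2.2.mono hIJ.1.subset⟩, Or.inr hIJ, depth_lt hIJ.1⟩
  · rintro I J (hIJ | hJI)
    exacts [(depth_lt hIJ.1).ne, (depth_lt hJI.1).ne']
  · have cover {J} (hJ : (HasseGraph n π).Adj I J) (hlt : depth J < depth I) :
        IntervalCover π J.1 I.1 :=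
      hJ.resolve_left fun hJI => (depth_lt hJI.1).not_gt hlt
    exact Subtype.ext <| h.eq_of_intervalCover I.2.2 J.2.1 J'.2.1 J.2.2 J'.2.2
      (cover hJ hlt) (cover hJ' hlt')
end
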